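/- Fix a real number t ≥ 2 and define F : [0,∞) → ℝ by F(λ) = 1 if λ ≤ 1 − 2/t; F(λ) = (1/8)(4 + t² − 2λt² + λ²t² + 4t(1−λ)·log(2/(t(1−λ)))) if 1 − 2/t ≤ λ < 1; F(λ) = (1/8)(4 − t² + 2λt² − λ²t² − 4t(λ−1)·log(2/(t(λ−1)))) if 1 ≤ λ < 1 + 2/t; and F(λ) = 0 if λ ≥ 1 + 2/t, where s·log(2/(ts)) is interpreted as 0 at s = 0. Then F is continuous on [0,∞), F is continuously differentiable on (0,1) ∪ (1,∞), and F'(λ) → −∞ as λ → 1 (from either side). -/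

import Mathlib

/-!
Put `u = t(1 - λ)`. For `|u| ≤ 2` one has `F(λ) = 1/2 + P(u)` with the odd function
`P(u) = u|u|/8 + (u/2)·log(2/u)` (`Real.log` is even, so this also covers `u < 0`), and `F` is
constant beyond, so `F(λ) = 1/2 + P(max (-2) (min u 2))` for every `λ`. The function `P` is
continuous, and differentiable away from `0` with `P'(u) = |u|/4 + (1/2)·log(2/u) - 1/2`.
Since `P'(±2) = 0`, clamping the argument to `[-2, 2]` keeps it differentiable, so
`F'(λ) = -t·P'(u)` for `λ ≠ 1`, which is continuous there and tends to `-∞` as `λ → 1`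
because `P'(u) ≈ -(1/2)·log|u|`.
-/

noncomputable section

/-- The limiting gap distribution `F = G_{t,𝒫}` for `t ≥ 2` (Corollary 1.2 of the
paper).  A term `s·log(2/(t·s))` is interpreted as `0` when `s = 0`; this is automatic
in Lean since `2/0 = 0` and `log 0 = 0`. -/
def Flim (t lam : ℝ) : ℝ :=
  if lam ≤ 1 - 2 / t then 1
  else if lam < 1 then
    (1 / 8) * (4 + t ^ 2 - 2 * lam * t ^ 2 + lam ^ 2 * t ^ 2 +
      4 * t * (1 - lam) * Real.log (2 / (t * (1 - lam))))
  else if lam < 1 + 2 / t then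
    (1 / 8) * (4 - t ^ 2 + 2 * lam * t ^ 2 - lam ^ 2 * t ^ 2 -
      4 * t * (lam - 1) * Real.log (2 / (t * (lam - 1))))
  else 0

open Real Set Filter Topology

section Clamping

variable {E : Type*} [NormedAddCommGroup E] [NormedSpace ℝ E]

theorem hasDerivAt_of_eventuallyEq_nhdsLE_nhdsGE {f g h : ℝ → E} {f' : E} {a : ℝ}
    (hg : HasDerivAt g f' a) (hh : HasDerivAt h f' a)
    (hfg : f =ᶠ[𝓝[≤] a] g) (hfh : f =ᶠ[𝓝[≥] a] h) : HasDerivAt f f' a := by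
  have hle := hg.hasDerivWithinAt.congr_of_eventuallyEq hfg
    (hfg.eq_of_nhdsWithin (mem_Iic.2 le_rfl))
  have hge := hh.hasDerivWithinAt.congr_of_eventuallyEq hfh
    (hfh.eq_of_nhdsWithin (mem_Ici.2 le_rfl))
  simpa only [Iic_union_Ici, hasDerivWithinAt_univ] using hle.union hge

theorem hasDerivAt_comp_max_min {f f' : ℝ → E} {a b x : ℝ} (hab : a < b)
    (ha : HasDerivAt f 0 a) (hb : HasDerivAt f 0 b) (hfa : f' a = 0) (hfb : f' b = 0)
    (hx : x ∈ Ioo a b → HasDerivAt f (f' x) x) :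
    HasDerivAt (fun u => f (max a (min u b))) (f' (max a (min x b))) x := by
  have hlow : EqOn (fun u => f (max a (min u b))) (fun _ => f a) (Iic a) := fun u hu => by
    simp only [max_eq_left ((min_le_left u b).trans hu)]
  have hmid : EqOn (fun u => f (max a (min u b))) f (Icc a b) := fun u hu => by
    simp only [min_eq_left hu.2, max_eq_right hu.1]
  have hhigh : EqOn (fun u => f (max a (min u b))) (fun _ => f b) (Ici b) := fun u hu => by
    simp only [min_eq_right (mem_Ici.1 hu), max_eq_right hab.le]
  rcases lt_trichotomy x a with hxa | rfl | hxa
  · rw [max_eq_left ((min_le_left x b).trans hxa.le), hfa]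
    exact (hasDerivAt_const x (f a)).congr_of_eventuallyEq
      (hlow.eventuallyEq_of_mem (Iic_mem_nhds hxa))
  · rw [min_eq_left hab.le, max_self, hfa]
    exact hasDerivAt_of_eventuallyEq_nhdsLE_nhdsGE (hasDerivAt_const x (f x)) ha
      (hlow.eventuallyEq_of_mem self_mem_nhdsWithin)
      (hmid.eventuallyEq_of_mem (Icc_mem_nhdsGE hab))
  rcases lt_trichotomy x b with hxb | rfl | hxb
  · rw [min_eq_left hxb.le, max_eq_right hxa.le]
    exact (hx ⟨hxa, hxb⟩).congr_of_eventuallyEq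
      (hmid.eventuallyEq_of_mem (Icc_mem_nhds hxa hxb))
  · rw [min_self, max_eq_right hab.le, hfb]
    exact hasDerivAt_of_eventuallyEq_nhdsLE_nhdsGE hb (hasDerivAt_const x (f x))
      (hmid.eventuallyEq_of_mem (Icc_mem_nhdsLE hab))
      (hhigh.eventuallyEq_of_mem self_mem_nhdsWithin)
  · rw [min_eq_right hxb.le, max_eq_right hab.le, hfb]
    exact (hasDerivAt_const x (f b)).congr_of_eventuallyEq
      (hhigh.eventuallyEq_of_mem (Ici_mem_nhds hxb))

theorem max_min_ne_zero {a b u : ℝ} (ha : a < 0) (hb : 0 < b) (hu : u ≠ 0) :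
    max a (min u b) ≠ 0 := by
  rcases hu.lt_or_gt with hu | hu
  · exact (max_lt ha ((min_le_left u b).trans_lt hu)).ne
  · exact (lt_max_of_lt_right (lt_min hu hb)).ne'

end Clamping

namespace GapDistribution

def profile (u : ℝ) : ℝ := u * |u| / 8 + u / 2 * log (2 / u)

def profileDeriv (u : ℝ) : ℝ := |u| / 4 + log (2 / u) / 2 - 1 / 2

def clampedProfile (u : ℝ) : ℝ := profile (max (-2) (min u 2))

theorem profile_two : profile 2 = 1 / 2 := by norm_num [profile]

theorem profile_neg_two : profile (-2) = -1 / 2 := by norm_num [profile, log_neg_eq_log]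

theorem profileDeriv_two : profileDeriv 2 = 0 := by norm_num [profileDeriv]

theorem profileDeriv_neg_two : profileDeriv (-2) = 0 := by
  norm_num [profileDeriv, log_neg_eq_log]

theorem continuous_profile : Continuous profile := by
  have h : profile = fun u => u * |u| / 8 + u / 2 * log 2 - u * log u / 2 := by
    funext u
    rcases eq_or_ne u 0 with rfl | hu
    · simp [profile]
    · rw [profile, log_div two_ne_zero hu]
      ring
  rw [h]
  exact (by fun_prop : Continuous fun u : ℝ => u * |u| / 8 + u / 2 * log 2).sub
    (continuous_mul_log.div_const 2)

theorem hasDerivAt_profile {u : ℝ} (hu : u ≠ 0) : HasDerivAt profile (profileDeriv u) u := by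
  have hquad : HasDerivAt (fun v => v * |v| / 8) ((1 * |u| + u * SignType.sign u) / 8) u :=
    ((hasDerivAt_id' u).mul (hasDerivAt_abs hu)).div_const 8
  have hlog : HasDerivAt (fun v => log (2 / v)) ((0 * u - 2 * 1) / u ^ 2 / (2 / u)) u :=
    ((hasDerivAt_const u (2 : ℝ)).div (hasDerivAt_id' u) hu).log (div_ne_zero two_ne_zero hu)
  refine (hquad.add (((hasDerivAt_id' u).div_const 2).mul hlog)).congr_deriv ?_
  rw [self_mul_sign, profileDeriv]
  field_simp
  ring

theorem continuousAt_profileDeriv {u : ℝ} (hu : u ≠ 0) : ContinuousAt profileDeriv u := by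
  have hlog : ContinuousAt (fun v => log (2 / v)) u :=
    (continuousAt_const.div continuousAt_id hu).log (div_ne_zero two_ne_zero hu)
  exact ((continuous_abs.continuousAt.div_const 4).add (hlog.div_const 2)).sub continuousAt_const

theorem tendsto_profileDeriv_nhdsNE_zero : Tendsto profileDeriv (𝓝[≠] 0) atTop := by
  have hbdd : Tendsto (fun u : ℝ => |u| / 4 + log 2 / 2 - 1 / 2) (𝓝[≠] 0)
      (𝓝 (|0| / 4 + log 2 / 2 - 1 / 2)) :=
    ((by fun_prop : Continuous fun u : ℝ => |u| / 4 + log 2 / 2 - 1 / 2).tendsto 0).mono_left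
      nhdsWithin_le_nhds
  have hlog : Tendsto (fun u => -log u / 2) (𝓝[≠] 0) atTop :=
    (tendsto_neg_atBot_atTop.comp tendsto_log_nhdsNE_zero).atTop_div_const two_pos
  refine (hbdd.add_atTop hlog).congr' ?_
  filter_upwards [self_mem_nhdsWithin] with u hu
  rw [profileDeriv, log_div two_ne_zero hu]
  ring

theorem continuous_clampedProfile : Continuous clampedProfile :=
  continuous_profile.comp (by fun_prop)

theorem hasDerivAt_clampedProfile {u : ℝ} (hu : u ≠ 0) :
    HasDerivAt clampedProfile (profileDeriv (max (-2) (min u 2))) u := by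
  have h2 : HasDerivAt profile 0 2 := profileDeriv_two ▸ hasDerivAt_profile two_ne_zero
  have hm2 : HasDerivAt profile 0 (-2) := profileDeriv_neg_two ▸ hasDerivAt_profile (by norm_num)
  exact hasDerivAt_comp_max_min (by norm_num) hm2 h2
    profileDeriv_neg_two profileDeriv_two fun _ => hasDerivAt_profile hu

end GapDistribution

open GapDistribution

section

variable {t : ℝ}

theorem Flim_eq_half_add_clampedProfile (ht : 0 < t) (lam : ℝ) :
    Flim t lam = 1 / 2 + clampedProfile (t * (1 - lam)) := by
  have hlow : lam ≤ 1 - 2 / t ↔ 2 ≤ t * (1 - lam) := by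
    rw [le_sub_comm, div_le_iff₀' ht]
  have hmid : lam < 1 ↔ 0 < t * (1 - lam) := by
    rw [mul_pos_iff_of_pos_left ht, sub_pos]
  have hhigh : lam < 1 + 2 / t ↔ -2 < t * (1 - lam) := by
    rw [← sub_lt_iff_lt_add', lt_div_iff₀' ht, neg_lt, ← mul_neg, neg_sub]
  unfold Flim clampedProfile
  split_ifs with h1 h2 h3
  · rw [min_eq_right (hlow.1 h1), max_eq_right (by norm_num), profile_two]
    norm_num
  · have hu := hmid.1 h2
    rw [min_eq_left (not_le.1 (mt hlow.2 h1)).le, max_eq_right (by linarith), profile,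
      abs_of_pos hu]
    ring
  · have hu := not_lt.1 (mt hmid.2 h2)
    rw [min_eq_left (by linarith), max_eq_right (hhigh.1 h3).le, profile, abs_of_nonpos hu,
      show t * (lam - 1) = -(t * (1 - lam)) by ring, div_neg, log_neg_eq_log]
    ring
  · rw [min_eq_left (by linarith [not_lt.1 (mt hhigh.2 h3)]),
      max_eq_left (not_lt.1 (mt hhigh.2 h3)), profile_neg_two]
    norm_num

theorem continuous_Flim (ht : 0 < t) : Continuous (Flim t) := by
  rw [funext (Flim_eq_half_add_clampedProfile ht)]
  exact continuous_const.add (continuous_clampedProfile.comp (by fun_prop))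

theorem hasDerivAt_Flim (ht : 0 < t) {lam : ℝ} (h : lam ≠ 1) :
    HasDerivAt (Flim t) (-t * profileDeriv (max (-2) (min (t * (1 - lam)) 2))) lam := by
  have hu : t * (1 - lam) ≠ 0 := mul_ne_zero ht.ne' (sub_ne_zero.2 h.symm)
  have hlin : HasDerivAt (fun l => t * (1 - l)) (-t) lam := by
    simpa using ((hasDerivAt_id lam).const_sub 1).const_mul t
  rw [funext (Flim_eq_half_add_clampedProfile ht), mul_comm]
  exact ((hasDerivAt_clampedProfile hu).comp lam hlin).const_add _

theorem continuousAt_deriv_Flim (ht : 0 < t) {lam : ℝ} (h : lam ≠ 1) :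
    ContinuousAt (deriv (Flim t)) lam := by
  have hu : t * (1 - lam) ≠ 0 := mul_ne_zero ht.ne' (sub_ne_zero.2 h.symm)
  have hderiv : deriv (Flim t) =ᶠ[𝓝 lam]
      fun l => -t * profileDeriv (max (-2) (min (t * (1 - l)) 2)) :=
    (eventually_ne_nhds h).mono fun l hl => (hasDerivAt_Flim ht hl).deriv
  refine ContinuousAt.congr ?_ hderiv.symm
  exact continuousAt_const.mul (ContinuousAt.comp (f := fun l => max (-2) (min (t * (1 - l)) 2))
    (continuousAt_profileDeriv (max_min_ne_zero (by norm_num) two_pos hu)) (by fun_prop))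

theorem tendsto_deriv_Flim_nhdsNE_one (ht : 0 < t) :
    Tendsto (deriv (Flim t)) (𝓝[≠] 1) atBot := by
  have hlin : Tendsto (fun l => t * (1 - l)) (𝓝[≠] 1) (𝓝[≠] 0) := by
    refine tendsto_nhdsWithin_of_tendsto_nhds_of_eventually_within _ ?_ ?_
    · simpa using ((by fun_prop : Continuous fun l : ℝ => t * (1 - l)).tendsto 1).mono_left
        nhdsWithin_le_nhds
    · filter_upwards [self_mem_nhdsWithin] with l hl
      exact mul_ne_zero ht.ne' (sub_ne_zero.2 (Ne.symm hl))
  refine ((tendsto_profileDeriv_nhdsNE_zero.comp hlin).const_mul_atTop_of_neg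
    (neg_neg_of_pos ht)).congr' ?_
  have hsmall : ∀ᶠ l in 𝓝[≠] (1 : ℝ), t * (1 - l) ∈ Ioo (-2) 2 :=
    hlin.mono_right nhdsWithin_le_nhds (Ioo_mem_nhds (by norm_num) (by norm_num))
  filter_upwards [self_mem_nhdsWithin, hsmall] with l hl hsmall
  rw [(hasDerivAt_Flim ht hl).deriv, min_eq_left hsmall.2.le, max_eq_right hsmall.1.le]
  rfl

end

/-- for fixed `t ≥ 2`, the limiting gap distribution `F = Flim t` is
continuous on `[0,∞)`, continuously differentiable on `(0,1) ∪ (1,∞)`, and its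
derivative tends to `-∞` as `λ → 1` from either side. -/
theorem stmt19 (t : ℝ) (ht : 2 ≤ t) :
    ContinuousOn (Flim t) (Set.Ici (0 : ℝ)) ∧
    ContDiffOn ℝ 1 (Flim t) (Set.Ioo (0 : ℝ) 1 ∪ Set.Ioi (1 : ℝ)) ∧
    Filter.Tendsto (deriv (Flim t)) (nhdsWithin 1 (Set.Iio (1 : ℝ))) Filter.atBot ∧
    Filter.Tendsto (deriv (Flim t)) (nhdsWithin 1 (Set.Ioi (1 : ℝ))) Filter.atBot := by
  have ht0 : 0 < t := by linarith
  have hne : ∀ lam ∈ Ioo (0 : ℝ) 1 ∪ Ioi 1, lam ≠ 1 := by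
    rintro lam (h | h)
    exacts [h.2.ne, h.ne']
  refine ⟨(continuous_Flim ht0).continuousOn, ?_,
    (tendsto_deriv_Flim_nhdsNE_one ht0).mono_left (nhdsWithin_mono _ fun _ h => ne_of_lt h),
    (tendsto_deriv_Flim_nhdsNE_one ht0).mono_left (nhdsWithin_mono _ fun _ h => ne_of_gt h)⟩
  rw [show (1 : WithTop ℕ∞) = 0 + 1 from rfl,
    contDiffOn_succ_iff_deriv_of_isOpen (isOpen_Ioo.union isOpen_Ioi), contDiffOn_zero]
  exact ⟨fun lam h => (hasDerivAt_Flim ht0 (hne lam h)).differentiableAt.differentiableWithinAt,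
    by simp, fun lam h => (continuousAt_deriv_Flim ht0 (hne lam h)).continuousWithinAt⟩

end
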